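/- arXiv:1109.6287 — 7 statements merged into one kernel-verified Lean document; each statement's English description precedes it below -/
import Mathlib

section
/- Let A and B be abelian groups, let m ≥ 1 be an integer, and let φ : A → B and ψ : B → A be additive group homomorphisms satisfying ψ ∘ φ = m • id_A and φ ∘ ψ = m • id_B. Let Γ be a fully invariant subgroup of A, and let Γ* be the smallest fully invariant subgroup of B containing the image φ(Γ). Then m • x ∈ φ(Γ) for every x ∈ Γ*; in particular, every element of the quotient group Γ*/φ(Γ) has order dividing m. -/
/-!
Every endomorphism `g` of `B` carries `φ(Γ)` into `ψ⁻¹(Γ)`, since `ψ ∘ g ∘ φ` is an endomorphism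
of `A` and `Γ` is fully invariant. So the fully invariant subgroup `⨆ g, g(φ(Γ))` generated by `φ(Γ)`,
and with it `Γ*`, lies in `ψ⁻¹(Γ)`; for `x ∈ Γ*` this gives `m • x = φ (ψ x) ∈ φ(Γ)`.
-/

/-- A subgroup is fully invariant if it is stable under every additive endomorphism. -/
def FullyInvariant {A : Type*} [AddCommGroup A] (Γ : AddSubgroup A) : Prop :=
  ∀ f : A →+ A, Γ.map f ≤ Γ

namespace AddSubgroup

variable {A B : Type*} [AddCommGroup A] [AddCommGroup B]

def fullyInvariantClosure (S : AddSubgroup B) : AddSubgroup B :=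
  ⨆ g : B →+ B, S.map g

theorem le_fullyInvariantClosure (S : AddSubgroup B) : S ≤ S.fullyInvariantClosure :=
  (map_id S).ge.trans (le_iSup (fun g : B →+ B => S.map g) (AddMonoidHom.id B))

theorem fullyInvariant_fullyInvariantClosure (S : AddSubgroup B) :
    FullyInvariant S.fullyInvariantClosure := by
  intro f
  rw [map_le_iff_le_comap]
  refine iSup_le fun g => ?_
  rw [← map_le_iff_le_comap, map_map]
  exact le_iSup (fun g : B →+ B => S.map g) (f.comp g)

theorem fullyInvariantClosure_map_le_comap {Γ : AddSubgroup A} (hΓ : FullyInvariant Γ)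
    (φ : A →+ B) (ψ : B →+ A) : (Γ.map φ).fullyInvariantClosure ≤ Γ.comap ψ := by
  refine iSup_le fun g => ?_
  rintro _ ⟨_, ⟨a, ha, rfl⟩, rfl⟩
  exact hΓ ((ψ.comp g).comp φ) ⟨a, ha, rfl⟩

theorem nsmul_mem_map_of_mem_fullyInvariantClosure {Γ : AddSubgroup A} (hΓ : FullyInvariant Γ)
    {m : ℕ} {φ : A →+ B} {ψ : B →+ A} (hφψ : ∀ b : B, φ (ψ b) = m • b) {x : B}
    (hx : x ∈ (Γ.map φ).fullyInvariantClosure) : m • x ∈ Γ.map φ :=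
  ⟨ψ x, fullyInvariantClosure_map_le_comap hΓ φ ψ hx, hφψ x⟩

theorem addOrderOf_dvd_of_forall_nsmul_mem {H K : AddSubgroup B} {m : ℕ}
    (hm : ∀ x ∈ K, m • x ∈ H) (y : K ⧸ H.addSubgroupOf K) : addOrderOf y ∣ m := by
  rw [addOrderOf_dvd_iff_nsmul_eq_zero]
  induction y using QuotientAddGroup.induction_on with
  | H x =>
    rw [← QuotientAddGroup.mk_nsmul, QuotientAddGroup.eq_zero_iff]
    exact hm x x.2

end AddSubgroup

open AddSubgroup in
theorem stmt0_general {A B : Type*} [AddCommGroup A] [AddCommGroup B]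
    (m : ℕ) (φ : A →+ B) (ψ : B →+ A)
    (hφψ : ∀ b : B, φ (ψ b) = m • b)
    (Γ : AddSubgroup A) (hΓ : FullyInvariant Γ)
    (Γstar : AddSubgroup B)
    (hmin : ∀ K : AddSubgroup B, FullyInvariant K → Γ.map φ ≤ K → Γstar ≤ K) :
    (∀ x ∈ Γstar, m • x ∈ Γ.map φ) ∧
    (∀ y : Γstar ⧸ (Γ.map φ).addSubgroupOf Γstar, addOrderOf y ∣ m) := by
  have hstar : Γstar ≤ (Γ.map φ).fullyInvariantClosure :=
    hmin _ (fullyInvariant_fullyInvariantClosure _) (le_fullyInvariantClosure _)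
  have hnsmul : ∀ x ∈ Γstar, m • x ∈ Γ.map φ := fun x hx =>
    nsmul_mem_map_of_mem_fullyInvariantClosure hΓ hφψ (hstar hx)
  exact ⟨hnsmul, addOrderOf_dvd_of_forall_nsmul_mem hnsmul⟩

theorem stmt0 {A B : Type*} [AddCommGroup A] [AddCommGroup B]
    (m : ℕ) (hm : 1 ≤ m) (φ : A →+ B) (ψ : B →+ A)
    (hψφ : ∀ a : A, ψ (φ a) = m • a) (hφψ : ∀ b : B, φ (ψ b) = m • b)
    (Γ : AddSubgroup A) (hΓ : FullyInvariant Γ)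
    (Γstar : AddSubgroup B) (hΓstar : FullyInvariant Γstar)
    (hsub : Γ.map φ ≤ Γstar)
    (hmin : ∀ K : AddSubgroup B, FullyInvariant K → Γ.map φ ≤ K → Γstar ≤ K) :
    (∀ x ∈ Γstar, m • x ∈ Γ.map φ) ∧
    (∀ y : Γstar ⧸ (Γ.map φ).addSubgroupOf Γstar, addOrderOf y ∣ m) :=
  stmt0_general m φ ψ hφψ Γ hΓ Γstar hmin
end

section
/- Let A and A' be abelian groups, let Γ be a finitely generated subgroup of A, let Γ' be a subgroup of A', and let m, m' ≥ 1 be integers. Then the following are equivalent: (i) there exists an additive group homomorphism φ : A → A' whose kernel is finite and such that the index of φ(Γ) ∩ Γ' in φ(Γ) is finite; (ii) there exists an additive group homomorphism φ : A → A' whose kernel is finite and such that the index of φ(m•Γ) ∩ (m'•Γ') in φ(m•Γ) is finite. Here m•Γ denotes the subgroup {m•g : g ∈ Γ}. -/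
/-!
Multiplication by `n ≠ 0` has finite-index image in a finitely generated abelian group. Put
`K = φ(Γ)`. If `m • K ⊓ m' • Γ'` has finite index in `m • K`, it has finite index in `K`, and
it lies in `K ⊓ Γ'`. Conversely, `K ⊓ Γ'` is finitely generated, so `(m * m') • (K ⊓ Γ')` has
finite index in `K` whenever `K ⊓ Γ'` does; it lies in `m • K ⊓ m' • Γ'`. The same `φ` works
in both directions.
-/

namespace AddSubgroup

variable {A A' : Type*} [AddCommGroup A] [AddCommGroup A']

theorem FG.map {G G' : Type*} [AddGroup G] [AddGroup G'] {K : AddSubgroup G} (hK : K.FG)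
    (φ : G →+ G') : (K.map φ).FG := by
  classical
  obtain ⟨S, rfl⟩ := hK
  exact ⟨S.image φ, by rw [Finset.coe_image, AddMonoidHom.map_closure]⟩

theorem FG.of_le {H K : AddSubgroup A} (hK : K.FG) (hHK : H ≤ K) : H.FG := by
  rw [← toIntSubmodule_toAddSubgroup H, ← Submodule.fg_iff_addSubgroup_fg]
  rw [← toIntSubmodule_toAddSubgroup K, ← Submodule.fg_iff_addSubgroup_fg] at hK
  exact hK.of_le hHK

theorem map_zsmulAddGroupHom_natCast (K : AddSubgroup A) (n : ℕ) :
    K.map (zsmulAddGroupHom (n : ℤ)) = K.map (nsmulAddMonoidHom n) := by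
  congr 1
  ext x
  exact natCast_zsmul x n

theorem map_nsmulAddMonoidHom_le (K : AddSubgroup A) (n : ℕ) :
    K.map (nsmulAddMonoidHom n) ≤ K := by
  rintro _ ⟨x, hx, rfl⟩
  exact K.nsmul_mem hx n

theorem map_map_nsmulAddMonoidHom_comm (K : AddSubgroup A) (φ : A →+ A') (n : ℕ) :
    (K.map (nsmulAddMonoidHom n)).map φ = (K.map φ).map (nsmulAddMonoidHom n) := by
  rw [map_map, map_map]
  congr 1
  ext x
  exact map_nsmul φ n x

theorem relIndex_map_nsmulAddMonoidHom_ne_zero {K : AddSubgroup A} (hK : K.FG) {n : ℕ}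
    (hn : n ≠ 0) : (K.map (nsmulAddMonoidHom n)).relIndex K ≠ 0 :=
  haveI := isFiniteRelIndex_map_nsmulAddMonoidHom_of_fg hK hn
  relIndex_ne_zero

theorem relIndex_inf_ne_zero_of_relIndex_map_nsmul_inf_ne_zero {K : AddSubgroup A} (hK : K.FG)
    (L : AddSubgroup A) {m : ℕ} (hm : m ≠ 0) (m' : ℕ)
    (h : (K.map (nsmulAddMonoidHom m) ⊓ L.map (nsmulAddMonoidHom m')).relIndex
      (K.map (nsmulAddMonoidHom m)) ≠ 0) :
    (K ⊓ L).relIndex K ≠ 0 := by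
  have hfin := relIndex_ne_zero_trans h (relIndex_map_nsmulAddMonoidHom_ne_zero hK hm)
  exact mt (relIndex_eq_zero_of_le_left
    (inf_le_inf (K.map_nsmulAddMonoidHom_le m) (L.map_nsmulAddMonoidHom_le m'))) hfin

theorem relIndex_map_nsmul_inf_ne_zero_of_relIndex_inf_ne_zero {K : AddSubgroup A} (hK : K.FG)
    (L : AddSubgroup A) {m m' : ℕ} (hm : m ≠ 0) (hm' : m' ≠ 0) (h : (K ⊓ L).relIndex K ≠ 0) :
    (K.map (nsmulAddMonoidHom m) ⊓ L.map (nsmulAddMonoidHom m')).relIndex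
      (K.map (nsmulAddMonoidHom m)) ≠ 0 := by
  set N := (K ⊓ L).map (nsmulAddMonoidHom (m * m'))
  have hNK : N.relIndex K ≠ 0 := relIndex_ne_zero_trans
    (relIndex_map_nsmulAddMonoidHom_ne_zero (hK.of_le inf_le_left) (mul_ne_zero hm hm')) h
  have hN : N ≤ K.map (nsmulAddMonoidHom m) ⊓ L.map (nsmulAddMonoidHom m') := by
    rintro _ ⟨x, ⟨hxK, hxL⟩, rfl⟩
    refine ⟨⟨m' • x, K.nsmul_mem hxK m', ?_⟩, ⟨m • x, L.nsmul_mem hxL m, ?_⟩⟩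
    · exact (mul_nsmul' x m m').symm
    · exact (mul_nsmul x m m').symm
  exact mt (relIndex_eq_zero_of_le_left hN)
    (mt (relIndex_eq_zero_of_le_right (K.map_nsmulAddMonoidHom_le m)) hNK)

end AddSubgroup

theorem stmt2 {A A' : Type*} [AddCommGroup A] [AddCommGroup A']
    (Γ : AddSubgroup A) (hΓ : Γ.FG) (Γ' : AddSubgroup A')
    (m m' : ℕ) (hm : 1 ≤ m) (hm' : 1 ≤ m') :
    (∃ φ : A →+ A', Finite φ.ker ∧
        ((Γ.map φ ⊓ Γ').addSubgroupOf (Γ.map φ)).index ≠ 0) ↔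
    (∃ φ : A →+ A', Finite φ.ker ∧
        (((Γ.map (zsmulAddGroupHom (m : ℤ))).map φ ⊓
            Γ'.map (zsmulAddGroupHom (m' : ℤ))).addSubgroupOf
          ((Γ.map (zsmulAddGroupHom (m : ℤ))).map φ)).index ≠ 0) := by
  simp only [← AddSubgroup.relIndex.eq_1, AddSubgroup.map_zsmulAddGroupHom_natCast,
    AddSubgroup.map_map_nsmulAddMonoidHom_comm]
  refine exists_congr fun φ ↦ and_congr_right fun _ ↦ ⟨fun h ↦ ?_, fun h ↦ ?_⟩
  · exact AddSubgroup.relIndex_map_nsmul_inf_ne_zero_of_relIndex_inf_ne_zero (hΓ.map φ) Γ'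
      (by omega) (by omega) h
  · exact AddSubgroup.relIndex_inf_ne_zero_of_relIndex_map_nsmul_inf_ne_zero (hΓ.map φ) Γ'
      (by omega) m' h
end

section
/- Let A, B, A', B' be abelian groups whose torsion subgroups are finite. Let m, m' ≥ 1 be integers, let ι : A → B and ι̂ : B → A be additive group homomorphisms with ι̂ ∘ ι = m • id_A and ι ∘ ι̂ = m • id_B, and let ι' : A' → B' and ι̂' : B' → A' be additive group homomorphisms with ι̂' ∘ ι' = m' • id_{A'} and ι' ∘ ι̂' = m' • id_{B'}. Let Γ be a subgroup of A and Γ' a subgroup of A'. Then the following are equivalent: (i) there exists an additive group homomorphism φ : A → A' with finite kernel such that φ(Γ) ∩ Γ' has finite index in φ(Γ); (ii) there exists an additive group homomorphism φ' : B → B' with finite kernel such that φ'(ι(Γ)) ∩ ι'(Γ') has finite index in φ'(ι(Γ)). -/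
/-!
An isogeny `ι` with quasi-inverse `ι̂` has finite kernel, since `ι̂ ∘ ι = m • id` puts the kernel
inside the finite torsion subgroup. Given `φ : A → A'` as in (i), the composite `ι' ∘ φ ∘ ι̂`
works for (ii): it has finite kernel, and it maps `ι(Γ)` into `ι'(φ(Γ))`, because
`ι̂(ι(Γ)) = mΓ ⊆ Γ`, while images under a homomorphism preserve finite relative index.
Symmetrically, `ι̂' ∘ φ' ∘ ι` turns a `φ'` as in (ii) into a `φ` as in (i), now using
`ι̂'(ι'(Γ')) ⊆ Γ'`.
-/

section

variable {G G₂ N N₂ P : Type*} [Group G] [Group G₂] [Group N] [Group N₂] [Group P]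

namespace MonoidHom

@[to_additive]
instance finite_ker_comp {f : G →* N} {g : N →* P} [Finite f.ker] [Finite g.ker] :
    Finite (g.comp f).ker := by
  rw [(f.comp (g.comp f).ker.subtype).finite_iff_finite_ker_range]
  constructor
  · refine Finite.of_injective (fun x ↦ (⟨x.1.1, x.2⟩ : f.ker)) fun x y hxy ↦ ?_
    exact Subtype.ext (Subtype.ext (congrArg (fun z : f.ker ↦ (z : G)) hxy))
  · refine Finite.Set.subset (g.ker : Set N) ?_
    rintro _ ⟨x, rfl⟩
    exact x.2

@[to_additive]
theorem finite_ker_of_comp_eq_pow (f : G →* N) (g : N →* G) {n : ℕ} (hn : 0 < n)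
    (hG : {x : G | IsOfFinOrder x}.Finite) (hgf : ∀ x, g (f x) = x ^ n) : Finite f.ker :=
  Set.Finite.to_subtype <| hG.subset fun x hx ↦
    isOfFinOrder_iff_pow_eq_one.2 ⟨n, hn, by rw [← hgf, hx, map_one]⟩

end MonoidHom

namespace Subgroup

@[to_additive]
theorem map_map_le_of_comp_eq_pow (f : G →* N) (g : N →* G) {n : ℕ} (hgf : ∀ x, g (f x) = x ^ n)
    (H : Subgroup G) : (H.map f).map g ≤ H := by
  rintro _ ⟨_, ⟨x, hx, rfl⟩, rfl⟩
  rw [hgf]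
  exact pow_mem hx n

@[to_additive]
theorem index_inf_subgroupOf_eq_relIndex (H K : Subgroup G) :
    ((H ⊓ K).subgroupOf H).index = K.relIndex H :=
  inf_relIndex_left H K

@[to_additive]
theorem relIndex_map_ne_zero (f : G →* N) {H K : Subgroup G} (h : H.relIndex K ≠ 0) :
    (H.map f).relIndex (K.map f) ≠ 0 := by
  rw [← relIndex_comap]
  exact fun h0 ↦ h (relIndex_eq_zero_of_le_left (le_comap_map f H) h0)

@[to_additive]
theorem relIndex_map_comp_ne_zero (φ : G →* N) (χ : G₂ →* G) (ψ : N →* N₂) {H : Subgroup G}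
    {K : Subgroup N} {H₂ : Subgroup G₂} {K₂ : Subgroup N₂} (h : K.relIndex (H.map φ) ≠ 0)
    (hH : H₂.map χ ≤ H) (hK : K.map ψ ≤ K₂) :
    K₂.relIndex (H₂.map (ψ.comp (φ.comp χ))) ≠ 0 := by
  have hle : H₂.map (ψ.comp (φ.comp χ)) ≤ (H.map φ).map ψ := by
    rw [← map_map, ← map_map]
    exact map_mono (map_mono hH)
  exact fun h0 ↦ relIndex_map_ne_zero ψ h
    (relIndex_eq_zero_of_le_left hK (relIndex_eq_zero_of_le_right hle h0))

end Subgroup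

end

open AddMonoidHom AddSubgroup in
theorem stmt3 {A B A' B' : Type*}
    [AddCommGroup A] [AddCommGroup B] [AddCommGroup A'] [AddCommGroup B']
    (htA : {a : A | IsOfFinAddOrder a}.Finite)
    (htB : {b : B | IsOfFinAddOrder b}.Finite)
    (htA' : {a : A' | IsOfFinAddOrder a}.Finite)
    (htB' : {b : B' | IsOfFinAddOrder b}.Finite)
    (m m' : ℕ) (hm : 1 ≤ m) (hm' : 1 ≤ m')
    (ι : A →+ B) (ιhat : B →+ A)
    (hι₁ : ∀ a : A, ιhat (ι a) = m • a) (hι₂ : ∀ b : B, ι (ιhat b) = m • b)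
    (ι' : A' →+ B') (ιhat' : B' →+ A')
    (hι₁' : ∀ a : A', ιhat' (ι' a) = m' • a) (hι₂' : ∀ b : B', ι' (ιhat' b) = m' • b)
    (Γ : AddSubgroup A) (Γ' : AddSubgroup A') :
    (∃ φ : A →+ A', Finite φ.ker ∧
        ((Γ.map φ ⊓ Γ').addSubgroupOf (Γ.map φ)).index ≠ 0) ↔
    (∃ φ' : B →+ B', Finite φ'.ker ∧
        (((Γ.map ι).map φ' ⊓ Γ'.map ι').addSubgroupOf ((Γ.map ι).map φ')).index ≠ 0) := by
  have : Finite ι.ker := finite_ker_of_comp_eq_nsmul ι ιhat hm htA hι₁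
  have : Finite ιhat.ker := finite_ker_of_comp_eq_nsmul ιhat ι hm htB hι₂
  have : Finite ι'.ker := finite_ker_of_comp_eq_nsmul ι' ιhat' hm' htA' hι₁'
  have : Finite ιhat'.ker := finite_ker_of_comp_eq_nsmul ιhat' ι' hm' htB' hι₂'
  simp only [index_inf_addSubgroupOf_eq_relIndex]
  constructor
  · rintro ⟨φ, _, hΓ⟩
    exact ⟨ι'.comp (φ.comp ιhat), inferInstance,
      relIndex_map_comp_ne_zero φ ιhat ι' hΓ
        (map_map_le_of_comp_eq_nsmul ι ιhat hι₁ Γ) le_rfl⟩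
  · rintro ⟨φ', _, hΓ⟩
    exact ⟨ιhat'.comp (φ'.comp ι), inferInstance,
      relIndex_map_comp_ne_zero φ' ι ιhat' hΓ le_rfl
        (map_map_le_of_comp_eq_nsmul ι' ιhat' hι₁' Γ')⟩
end

section
/- Let A and A' be abelian groups, let G and G' be finite abelian groups, and let r : A → G, r' : A' → G', φ : A → A', φ̄ : G → G' be additive group homomorphisms satisfying φ̄ ∘ r = r' ∘ φ. Let Γ be a subgroup of A and Γ' a subgroup of A', and suppose the index i of φ(Γ) ∩ Γ' in φ(Γ) is finite. Let ℓ be a prime number dividing neither i nor the order of the kernel of φ̄. Then: (a) the ℓ-adic valuation of |r(Γ)| is at most the ℓ-adic valuation of |r'(Γ')|; (b) the ℓ-adic valuation of the exponent of r(Γ) is at most the ℓ-adic valuation of the exponent of r'(Γ'); (c) if ℓ divides |r(Γ)| then ℓ divides |r'(Γ')|. -/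
/-!
Put `H = r(Γ)` and `H' = r'(Γ')`. Every `φ(γ)` has `i • φ(γ) ∈ Γ'`, so `ψ : x ↦ i • φ̄(x)` maps `H`
into `H'`, and `ψ` is injective on `ℓ`-torsion: `i` is prime to `ℓ`, and `ker φ̄` has no element of
order `ℓ` since `ℓ ∤ |ker φ̄|`. Such a `ψ` has a kernel of order prime to `ℓ` (Cauchy), so
`|H| = |ψ(H)| · |ker ψ|` gives (a), and it preserves the order of every element of `ℓ`-power
order, which gives (b).
-/

open AddSubgroup

variable {ℓ : ℕ}

theorem eq_zero_of_nsmul_eq_zero_of_coprime {M : Type*} [AddMonoid M] {m n : ℕ}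
    (hmn : m.Coprime n) {x : M} (hm : m • x = 0) (hn : n • x = 0) : x = 0 :=
  AddMonoid.addOrderOf_eq_one_iff.mp <| Nat.dvd_one.mp <| hmn.gcd_eq_one ▸
    Nat.dvd_gcd (addOrderOf_dvd_of_nsmul_eq_zero hm) (addOrderOf_dvd_of_nsmul_eq_zero hn)

theorem eq_zero_of_prime_nsmul_eq_zero {K : Type*} [AddGroup K] (hℓ : ℓ.Prime)
    (hK : ¬ ℓ ∣ Nat.card K) {x : K} (hx : ℓ • x = 0) : x = 0 := by
  by_contra hne
  have := Fact.mk hℓ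
  exact hK (addOrderOf_eq_prime hx hne ▸ addOrderOf_dvd_natCard x)

theorem not_dvd_natCard_of_prime_nsmul_eq_zero {K : Type*} [AddGroup K] [Finite K]
    (hℓ : ℓ.Prime) (hK : ∀ x : K, ℓ • x = 0 → x = 0) : ¬ ℓ ∣ Nat.card K := by
  intro hdvd
  have := Fact.mk hℓ
  obtain ⟨x, hx⟩ := exists_prime_addOrderOf_dvd_card' ℓ hdvd
  have hx0 : x = 0 := hK x (hx ▸ addOrderOf_nsmul_eq_zero x)
  exact hℓ.ne_one (by rw [← hx, hx0, addOrderOf_zero])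

namespace AddMonoidHom

variable {H H' : Type*} [AddGroup H] [AddGroup H'] (ψ : H →+ H')

theorem addOrderOf_map_of_eq_prime_pow (hℓ : ℓ.Prime) (hψ : ∀ x, ψ x = 0 → ℓ • x = 0 → x = 0)
    {x : H} {k : ℕ} (hx : addOrderOf x = ℓ ^ k) : addOrderOf (ψ x) = ℓ ^ k := by
  have := Fact.mk hℓ
  cases k with
  | zero =>
    rw [pow_zero, AddMonoid.addOrderOf_eq_one_iff] at hx ⊢
    rw [hx, map_zero]
  | succ n =>
    refine addOrderOf_eq_prime_pow (fun h ↦ ?_) ?_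
    · have hx0 : ℓ ^ n • x = 0 := hψ _ (by rw [map_nsmul, h])
        (by rw [smul_smul, ← pow_succ', ← hx, addOrderOf_nsmul_eq_zero])
      have hdvd : ℓ ^ (n + 1) ∣ ℓ ^ n := hx ▸ addOrderOf_dvd_of_nsmul_eq_zero hx0
      exact n.not_succ_le_self ((Nat.pow_dvd_pow_iff_le_right hℓ.one_lt).mp hdvd)
    · rw [← map_nsmul, ← hx, addOrderOf_nsmul_eq_zero, map_zero]

theorem factorization_exponent_le [Finite H'] (hℓ : ℓ.Prime)
    (hψ : ∀ x, ψ x = 0 → ℓ • x = 0 → x = 0) :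
    (AddMonoid.exponent H).factorization ℓ ≤ (AddMonoid.exponent H').factorization ℓ := by
  obtain ⟨x, hx⟩ := hℓ.exists_addOrderOf_eq_pow_padic_val_nat_add_exponent H
  refine (hℓ.pow_dvd_iff_le_factorization AddMonoid.exponent_ne_zero_of_finite).mp ?_
  rw [← ψ.addOrderOf_map_of_eq_prime_pow hℓ hψ hx]
  exact AddMonoid.addOrder_dvd_exponent _

theorem factorization_natCard_le [Finite H] [Finite H'] (hℓ : ℓ.Prime)
    (hψ : ∀ x, ψ x = 0 → ℓ • x = 0 → x = 0) :
    (Nat.card H).factorization ℓ ≤ (Nat.card H').factorization ℓ := by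
  have hker : ¬ ℓ ∣ Nat.card ψ.ker := not_dvd_natCard_of_prime_nsmul_eq_zero hℓ fun x hx ↦
    Subtype.ext (hψ x x.2 (congrArg Subtype.val hx))
  have hcard : Nat.card H = Nat.card ψ.range * Nat.card ψ.ker := by
    rw [← index_ker, index_mul_card]
  calc (Nat.card H).factorization ℓ
      = (Nat.card ψ.range).factorization ℓ + (Nat.card ψ.ker).factorization ℓ := by
        rw [hcard, Nat.factorization_mul Nat.card_pos.ne' Nat.card_pos.ne', Finsupp.add_apply]
    _ = (Nat.card ψ.range).factorization ℓ := by
        rw [Nat.factorization_eq_zero_of_not_dvd hker, add_zero]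
    _ ≤ (Nat.card H').factorization ℓ :=
        Nat.factorization_le_factorization_of_dvd_right (card_addSubgroup_dvd_card _)
          Nat.card_pos.ne' Nat.card_pos.ne'

end AddMonoidHom

theorem stmt5_general {A A' G G' : Type*}
    [AddCommGroup A] [AddCommGroup A'] [AddCommGroup G] [AddCommGroup G']
    [Finite G] [Finite G']
    (r : A →+ G) (r' : A' →+ G') (φ : A →+ A') (φbar : G →+ G')
    (hcomm : ∀ a : A, φbar (r a) = r' (φ a))
    (Γ : AddSubgroup A) (Γ' : AddSubgroup A')
    (i : ℕ) (hi : i = ((Γ.map φ ⊓ Γ').addSubgroupOf (Γ.map φ)).index)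
    (ℓ : ℕ) (hℓ : ℓ.Prime) (hℓi : ¬ ℓ ∣ i) (hℓker : ¬ ℓ ∣ Nat.card φbar.ker) :
    (Nat.card ↥(Γ.map r)).factorization ℓ ≤ (Nat.card ↥(Γ'.map r')).factorization ℓ ∧
    (AddMonoid.exponent ↥(Γ.map r)).factorization ℓ
      ≤ (AddMonoid.exponent ↥(Γ'.map r')).factorization ℓ ∧
    (ℓ ∣ Nat.card ↥(Γ.map r) → ℓ ∣ Nat.card ↥(Γ'.map r')) := by
  have hmem : ∀ g ∈ Γ.map r, i • φbar g ∈ Γ'.map r' := by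
    rintro _ ⟨a, ha, rfl⟩
    have hiφa : i • φ a ∈ Γ.map φ ⊓ Γ' := hi ▸ nsmul_relIndex_mem _ (mem_map_of_mem φ ha)
    exact ⟨i • φ a, hiφa.2, by rw [map_nsmul, hcomm]⟩
  let ψ : Γ.map r →+ Γ'.map r' :=
    ((i • φbar).comp (Γ.map r).subtype).codRestrict _ fun x ↦ hmem x x.2
  have hψ : ∀ x, ψ x = 0 → ℓ • x = 0 → x = 0 := by
    intro x hψx hℓx
    have hℓx' : ℓ • (x : G) = 0 := by simpa using congrArg Subtype.val hℓx
    have hφx : φbar x = 0 := eq_zero_of_nsmul_eq_zero_of_coprime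
      ((Nat.Prime.coprime_iff_not_dvd hℓ).mpr hℓi) (by rw [← map_nsmul, hℓx', map_zero])
      (congrArg Subtype.val hψx)
    have hx0 : (⟨x, hφx⟩ : φbar.ker) = 0 :=
      eq_zero_of_prime_nsmul_eq_zero hℓ hℓker (Subtype.ext hℓx')
    simpa using congrArg Subtype.val hx0
  have hcard := ψ.factorization_natCard_le hℓ hψ
  refine ⟨hcard, ψ.factorization_exponent_le hℓ hψ, fun hdvd ↦ ?_⟩
  rw [hℓ.dvd_iff_one_le_factorization Nat.card_pos.ne'] at hdvd ⊢
  exact hdvd.trans hcard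

theorem stmt5 {A A' G G' : Type*}
    [AddCommGroup A] [AddCommGroup A'] [AddCommGroup G] [AddCommGroup G']
    [Finite G] [Finite G']
    (r : A →+ G) (r' : A' →+ G') (φ : A →+ A') (φbar : G →+ G')
    (hcomm : ∀ a : A, φbar (r a) = r' (φ a))
    (Γ : AddSubgroup A) (Γ' : AddSubgroup A')
    (i : ℕ) (hi : i = ((Γ.map φ ⊓ Γ').addSubgroupOf (Γ.map φ)).index) (hifin : i ≠ 0)
    (ℓ : ℕ) (hℓ : ℓ.Prime) (hℓi : ¬ ℓ ∣ i) (hℓker : ¬ ℓ ∣ Nat.card φbar.ker) :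
    (Nat.card ↥(Γ.map r)).factorization ℓ ≤ (Nat.card ↥(Γ'.map r')).factorization ℓ ∧
    (AddMonoid.exponent ↥(Γ.map r)).factorization ℓ
      ≤ (AddMonoid.exponent ↥(Γ'.map r')).factorization ℓ ∧
    (ℓ ∣ Nat.card ↥(Γ.map r) → ℓ ∣ Nat.card ↥(Γ'.map r')) :=
  stmt5_general r r' φ φbar hcomm Γ Γ' i hi ℓ hℓ hℓi hℓker
end

section
/- Let A be an abelian group such that every nonzero additive group endomorphism of A has finite kernel, and such that for every nonzero additive endomorphism φ of A there exist an additive endomorphism ψ of A and an integer m ≥ 1 with ψ ∘ φ = m • id_A. Let P_1, …, P_r ∈ A be elements of infinite order. Then the following are equivalent: (1) the points P_1, …, P_r are almost free, i.e. for all additive endomorphisms φ_1, …, φ_r of A, Σ_i φ_i(P_i) = 0 implies φ_i(P_i) = 0 for all i; (2) for every integer n and all additive endomorphisms φ_2, …, φ_r of A, n • P_1 + Σ_{i=2}^r φ_i(P_i) = 0 implies n • P_1 = 0 and φ_i(P_i) = 0 for all i ≥ 2. -/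
/-!
If `φ₁ ≠ 0`, compose a relation `φ₁ P₁ + ∑ φᵢ Pᵢ = 0` with a quasi-inverse `ψ` of `φ₁`
(`ψ ∘ φ₁ = m • id`): this gives an integer relation `m • P₁ + ∑ (ψ ∘ φᵢ) Pᵢ = 0`, so the second
condition forces `m • P₁ = 0`, contradicting that `P₁` has infinite order.
-/

section

variable {A ι : Type*} [AddCommGroup A] [Fintype ι]

theorem nsmul_add_sum_comp_eq_zero_of_comp_eq_nsmul {ψ φ₁ : A →+ A} {m : ℕ}
    (hψ : ∀ a, ψ (φ₁ a) = m • a) {P₁ : A} {P : ι → A} {φ : ι → A →+ A}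
    (h : φ₁ P₁ + ∑ i, φ i (P i) = 0) :
    m • P₁ + ∑ i, (ψ.comp (φ i)) (P i) = 0 := by
  simpa only [map_add, map_sum, map_zero, hψ, AddMonoidHom.comp_apply] using congrArg ψ h

end

theorem stmt7_general {A : Type*} [AddCommGroup A]
    (hquasi : ∀ φ : A →+ A, φ ≠ 0 →
      ∃ (ψ : A →+ A) (m : ℕ), 1 ≤ m ∧ ∀ a : A, ψ (φ a) = m • a)
    {r : ℕ} (P₁ : A) (P : Fin r → A)
    (hP₁ : ¬ IsOfFinAddOrder P₁) :
    (∀ (φ₁ : A →+ A) (φ : Fin r → A →+ A),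
        φ₁ P₁ + ∑ i, φ i (P i) = 0 → φ₁ P₁ = 0 ∧ ∀ i, φ i (P i) = 0) ↔
    (∀ (n : ℤ) (φ : Fin r → A →+ A),
        n • P₁ + ∑ i, φ i (P i) = 0 → n • P₁ = 0 ∧ ∀ i, φ i (P i) = 0) := by
  refine ⟨fun h n φ ↦ h (zsmulAddGroupHom n) φ, fun h φ₁ φ hsum ↦ ?_⟩
  by_cases hφ₁ : φ₁ = 0
  · subst hφ₁
    simpa using h 0 φ (by simpa using hsum)
  obtain ⟨ψ, m, hm, hψ⟩ := hquasi φ₁ hφ₁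
  have hmP : (m : ℤ) • P₁ = 0 :=
    (h m _ (by simpa only [natCast_zsmul] using
      nsmul_add_sum_comp_eq_zero_of_comp_eq_nsmul hψ hsum)).1
  rw [natCast_zsmul] at hmP
  exact absurd (isOfFinAddOrder_iff_nsmul_eq_zero.mpr ⟨m, hm, hmP⟩) hP₁

theorem stmt7 {A : Type*} [AddCommGroup A]
    (hker : ∀ φ : A →+ A, φ ≠ 0 → Finite φ.ker)
    (hquasi : ∀ φ : A →+ A, φ ≠ 0 →
      ∃ (ψ : A →+ A) (m : ℕ), 1 ≤ m ∧ ∀ a : A, ψ (φ a) = m • a)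
    {r : ℕ} (P₁ : A) (P : Fin r → A)
    (hP₁ : ¬ IsOfFinAddOrder P₁) (hP : ∀ i, ¬ IsOfFinAddOrder (P i)) :
    (∀ (φ₁ : A →+ A) (φ : Fin r → A →+ A),
        φ₁ P₁ + ∑ i, φ i (P i) = 0 → φ₁ P₁ = 0 ∧ ∀ i, φ i (P i) = 0) ↔
    (∀ (n : ℤ) (φ : Fin r → A →+ A),
        n • P₁ + ∑ i, φ i (P i) = 0 → n • P₁ = 0 ∧ ∀ i, φ i (P i) = 0) :=
  stmt7_general hquasi P₁ P hP₁
end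

section
/- Let A be an abelian group such that every nonzero additive group endomorphism of A has finite kernel, and such that for every nonzero additive endomorphism φ of A there exist an additive endomorphism ψ of A and an integer m ≥ 1 with ψ ∘ φ = m • id_A. Let P_1, …, P_r ∈ A be almost free points, and let Γ be the smallest fully invariant subgroup of A containing P_1, …, P_r. If Q ∈ A satisfies n • Q ∉ Γ for every integer n ≥ 1, then the points P_1, …, P_r, Q are almost free. -/
theorem not_isOfFinAddOrder_of_forall_nsmul_notMem {G : Type*} [AddGroup G] {H : AddSubgroup G}
    {x : G} (hx : ∀ n : ℕ, 1 ≤ n → n • x ∉ H) : ¬ IsOfFinAddOrder x := fun h =>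
  hx (addOrderOf x) h.addOrderOf_pos (by rw [addOrderOf_nsmul_eq_zero]; exact H.zero_mem)

namespace FullyInvariant

variable {A : Type*} [AddCommGroup A] {Γ : AddSubgroup A}

theorem apply_mem (hΓ : FullyInvariant Γ) (f : A →+ A) {x : A} (hx : x ∈ Γ) : f x ∈ Γ :=
  hΓ f ⟨x, hx, rfl⟩

theorem sum_apply_mem (hΓ : FullyInvariant Γ) {ι : Type*} (s : Finset ι) (f : ι → A →+ A)
    {x : ι → A} (hx : ∀ i, x i ∈ Γ) : ∑ i ∈ s, f i (x i) ∈ Γ :=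
  Γ.sum_mem fun i _ => hΓ.apply_mem (f i) (hx i)

theorem eq_zero_of_apply_mem (hΓ : FullyInvariant Γ)
    (hquasi : ∀ φ : A →+ A, φ ≠ 0 → ∃ (ψ : A →+ A) (m : ℕ), 1 ≤ m ∧ ∀ a : A, ψ (φ a) = m • a)
    {Q : A} (hQ : ∀ n : ℕ, 1 ≤ n → n • Q ∉ Γ) {ψ : A →+ A} (hψQ : ψ Q ∈ Γ) : ψ = 0 := by
  by_contra hψ
  obtain ⟨χ, m, hm, hχ⟩ := hquasi ψ hψ
  exact hQ m hm (hχ Q ▸ hΓ.apply_mem χ hψQ)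

end FullyInvariant

theorem stmt8_general {A : Type*} [AddCommGroup A]
    (hquasi : ∀ φ : A →+ A, φ ≠ 0 →
      ∃ (ψ : A →+ A) (m : ℕ), 1 ≤ m ∧ ∀ a : A, ψ (φ a) = m • a)
    {r : ℕ} (P : Fin r → A)
    (hfree : ∀ φ : Fin r → A →+ A, ∑ i, φ i (P i) = 0 → ∀ i, φ i (P i) = 0)
    (Γ : AddSubgroup A) (hΓ : FullyInvariant Γ) (hPΓ : ∀ i, P i ∈ Γ)
    (Q : A) (hQ : ∀ n : ℕ, 1 ≤ n → n • Q ∉ Γ) :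
    (¬ IsOfFinAddOrder Q) ∧
    ∀ (φ : Fin r → A →+ A) (ψ : A →+ A),
      ∑ i, φ i (P i) + ψ Q = 0 → (∀ i, φ i (P i) = 0) ∧ ψ Q = 0 := by
  refine ⟨not_isOfFinAddOrder_of_forall_nsmul_notMem hQ, fun φ ψ hsum => ?_⟩
  have hψQ : ψ Q ∈ Γ := by
    rw [eq_neg_of_add_eq_zero_right hsum]
    exact Γ.neg_mem (hΓ.sum_apply_mem _ φ hPΓ)
  obtain rfl : ψ = 0 := hΓ.eq_zero_of_apply_mem hquasi hQ hψQ
  rw [AddMonoidHom.zero_apply, add_zero] at hsum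
  exact ⟨hfree φ hsum, rfl⟩

theorem stmt8 {A : Type*} [AddCommGroup A]
    (hker : ∀ φ : A →+ A, φ ≠ 0 → Finite φ.ker)
    (hquasi : ∀ φ : A →+ A, φ ≠ 0 →
      ∃ (ψ : A →+ A) (m : ℕ), 1 ≤ m ∧ ∀ a : A, ψ (φ a) = m • a)
    {r : ℕ} (P : Fin r → A) (hP : ∀ i, ¬ IsOfFinAddOrder (P i))
    (hfree : ∀ φ : Fin r → A →+ A, ∑ i, φ i (P i) = 0 → ∀ i, φ i (P i) = 0)
    (Γ : AddSubgroup A) (hΓ : FullyInvariant Γ) (hPΓ : ∀ i, P i ∈ Γ)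
    (hmin : ∀ K : AddSubgroup A, FullyInvariant K → (∀ i, P i ∈ K) → Γ ≤ K)
    (Q : A) (hQ : ∀ n : ℕ, 1 ≤ n → n • Q ∉ Γ) :
    (¬ IsOfFinAddOrder Q) ∧
    ∀ (φ : Fin r → A →+ A) (ψ : A →+ A),
      ∑ i, φ i (P i) + ψ Q = 0 → (∀ i, φ i (P i) = 0) ∧ ψ Q = 0 :=
  stmt8_general hquasi P hfree Γ hΓ hPΓ Q hQ
end

section
/- Let A be an abelian group and let X and Y be disjoint subsets of A such that every finite tuple of pairwise distinct points of X ∪ Y is almost free. Let Γ be the smallest fully invariant subgroup of A containing X and Γ' the smallest fully invariant subgroup of A containing Y. Then Γ ∩ Γ' = {0}. -/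
open Submodule

lemma Submodule.disjoint_span_image_of_iSupIndep {R M ι : Type*} [Ring R] [AddCommGroup M]
    [Module R M] {v : ι → M} (hv : iSupIndep fun i => R ∙ v i) {s t : Set ι}
    (hst : Disjoint s t) : Disjoint (span R (v '' s)) (span R (v '' t)) := by
  rw [span_eq_iSup_of_singleton_spans, span_eq_iSup_of_singleton_spans, iSup_image, iSup_image]
  exact hv.disjoint_biSup_biSup hst

section
variable {A : Type*} [AddCommGroup A]

lemma fullyInvariant_span_addMonoidEnd (X : Set A) :
    FullyInvariant (span (AddMonoid.End A) X).toAddSubgroup := by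
  rintro f _ ⟨a, ha, rfl⟩
  exact smul_mem (R := AddMonoid.End A) _ f ha

lemma iSupIndep_addMonoidEnd_span_singleton {S : Set A}
    (hS : ∀ (r : ℕ) (P : Fin r → A), Function.Injective P → (∀ i, P i ∈ S) →
      ∀ φ : Fin r → A →+ A, ∑ i, φ i (P i) = 0 → ∀ i, φ i (P i) = 0) :
    iSupIndep fun a : S => AddMonoid.End A ∙ (a : A) := by
  rw [iSupIndep_iff_finsetSum_eq_zero_imp_eq_zero]
  intro s w hw hsum i hi
  choose φ hφ using fun j : s => mem_span_singleton.mp (hw j j.2)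
  let e := s.equivFin
  let P : Fin s.card → A := fun k => (e.symm k : S)
  let ψ : Fin s.card → A →+ A := fun k => φ (e.symm k)
  have hψ : ∑ k, ψ k (P k) = 0 := calc
    ∑ k, ψ k (P k) = ∑ k, w (e.symm k) := Fintype.sum_congr _ _ fun k => hφ _
    _ = ∑ j ∈ s, w j := by rw [e.symm.sum_comp (fun j => w j), Finset.sum_coe_sort]
    _ = 0 := hsum
  have hP : Function.Injective P := fun k l hkl =>
    e.symm.injective (Subtype.ext (Subtype.ext hkl))
  have hzero := hS s.card P hP (fun k => (e.symm k : S).2) ψ hψ (e ⟨i, hi⟩)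
  rw [← hφ ⟨i, hi⟩, ← e.symm_apply_apply ⟨i, hi⟩]
  exact hzero

end

theorem stmt10_general {A : Type*} [AddCommGroup A] (X Y : Set A) (hXY : Disjoint X Y)
    (hfree : ∀ (r : ℕ) (P : Fin r → A), Function.Injective P →
      (∀ i, P i ∈ X ∪ Y) →
      (∀ i, ¬ IsOfFinAddOrder (P i)) ∧
      ∀ φ : Fin r → A →+ A, ∑ i, φ i (P i) = 0 → ∀ i, φ i (P i) = 0)
    (Γ Γ' : AddSubgroup A)
    (hΓmin : ∀ K : AddSubgroup A, FullyInvariant K → X ⊆ K → Γ ≤ K)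
    (hΓ'min : ∀ K : AddSubgroup A, FullyInvariant K → Y ⊆ K → Γ' ≤ K) :
    Γ ⊓ Γ' = ⊥ := by
  have hindep := iSupIndep_addMonoidEnd_span_singleton fun r P hP hPXY => (hfree r P hP hPXY).2
  have hspan := disjoint_span_image_of_iSupIndep hindep (hXY.preimage Subtype.val)
  rw [Subtype.image_preimage_coe, Subtype.image_preimage_coe,
    Set.inter_eq_right.mpr Set.subset_union_left,
    Set.inter_eq_right.mpr Set.subset_union_right] at hspan
  have hΓX := hΓmin _ (fullyInvariant_span_addMonoidEnd X) subset_span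
  have hΓ'Y := hΓ'min _ (fullyInvariant_span_addMonoidEnd Y) subset_span
  rw [← disjoint_iff, AddSubgroup.disjoint_def]
  exact fun ha ha' => disjoint_def.mp hspan _ (hΓX ha) (hΓ'Y ha')

theorem stmt10 {A : Type*} [AddCommGroup A] (X Y : Set A) (hXY : Disjoint X Y)
    (hfree : ∀ (r : ℕ) (P : Fin r → A), Function.Injective P →
      (∀ i, P i ∈ X ∪ Y) →
      (∀ i, ¬ IsOfFinAddOrder (P i)) ∧
      ∀ φ : Fin r → A →+ A, ∑ i, φ i (P i) = 0 → ∀ i, φ i (P i) = 0)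
    (Γ Γ' : AddSubgroup A)
    (hΓ : FullyInvariant Γ) (hXΓ : X ⊆ Γ)
    (hΓmin : ∀ K : AddSubgroup A, FullyInvariant K → X ⊆ K → Γ ≤ K)
    (hΓ' : FullyInvariant Γ') (hYΓ' : Y ⊆ Γ')
    (hΓ'min : ∀ K : AddSubgroup A, FullyInvariant K → Y ⊆ K → Γ' ≤ K) :
    Γ ⊓ Γ' = ⊥ :=
  stmt10_general X Y hXY hfree Γ Γ' hΓmin hΓ'min
end
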